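/- Let (Γ,w) be a stable weighted graph of genus g ≥ 2 and d an integer. The map α : B̄_d(Γ,w) → B̄_d(Γ²,w²), defined by α(d)(c) = Σ_{v∈c} d(v) for each class c ∈ V², is surjective: every balanced multidegree of total degree d on (Γ²,w²) is of the form α(d) for some balanced multidegree d of total degree d on (Γ,w). -/

import Mathlib

open Finset

noncomputable section
open scoped Classical

variable {V : Type} [Fintype V] [DecidableEq V]

/-- The simple graph underlying a multigraph with multiplicity function `k`:
`u` and `v` are adjacent iff `u ≠ v` and some edge joins them. -/
def graphOf (k : V → V → ℕ) : SimpleGraph V where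
  Adj u v := u ≠ v ∧ (0 < k u v ∨ 0 < k v u)
  symm := ⟨fun u v h => ⟨h.1.symm, h.2.symm⟩⟩
  loopless := ⟨fun v h => h.1 rfl⟩

/-- The number of edges of a multigraph: loops plus half the ordered count. -/
def numEdges (k : V → V → ℕ) : ℕ :=
  (∑ v, k v v) + (∑ u, ∑ v ∈ Finset.univ.erase u, k u v) / 2

/-- The genus of a weighted graph: `∑ w(v) + b₁`, with `b₁ = #E - #V + 1`. -/
def genus (k : V → V → ℕ) (w : V → ℕ) : ℤ :=
  (∑ v, (w v : ℤ)) + ((numEdges k : ℤ) - (Fintype.card V : ℤ) + 1)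

/-- Stability: connected, and each weight-zero vertex has valency at least 3. -/
def IsStable (k : V → V → ℕ) (w : V → ℕ) : Prop :=
  (graphOf k).Connected ∧
    ∀ v, w v = 0 → 3 ≤ 2 * k v v + ∑ u ∈ Finset.univ.erase v, k u v

/-- `δ_A`: the number of edges joining `A` to its complement. -/
def deltaA (k : V → V → ℕ) (A : Finset V) : ℤ :=
  ∑ u ∈ A, ∑ v ∈ Aᶜ, (k u v : ℤ)

/-- `w_A = Σ_{v∈A} (2w(v) − 2 + 2k(v,v) + Σ_{u≠v} k(u,v))`. -/
def wA (k : V → V → ℕ) (w : V → ℕ) (A : Finset V) : ℤ :=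
  ∑ v ∈ A, (2 * (w v : ℤ) - 2 + 2 * (k v v : ℤ) + ∑ u ∈ Finset.univ.erase v, (k u v : ℤ))

/-- `d_A`: the total degree of a multidegree on the subset `A`. -/
def degA (d : V → ℤ) (A : Finset V) : ℤ := ∑ v ∈ A, d v

/-- `m_A(d) = d·w_A/(2g−2) − δ_A/2 ∈ ℚ`. -/
def mA (k : V → V → ℕ) (w : V → ℕ) (D : ℤ) (A : Finset V) : ℚ :=
  (D : ℚ) * (wA k w A : ℚ) / ((2 * genus k w - 2 : ℤ) : ℚ) - (deltaA k A : ℚ) / 2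

/-- A balanced multidegree of total degree `D`. -/
def IsBalanced (k : V → V → ℕ) (w : V → ℕ) (D : ℤ) (d : V → ℤ) : Prop :=
  degA d Finset.univ = D ∧ ∀ A : Finset V, mA k w D A ≤ (degA d A : ℚ)

/-- A strictly balanced multidegree of total degree `D`. -/
def IsStrictlyBalanced (k : V → V → ℕ) (w : V → ℕ) (D : ℤ) (d : V → ℤ) : Prop :=
  IsBalanced k w D d ∧
    ∀ A : Finset V, A ≠ ∅ → A ≠ Finset.univ → mA k w D A < (degA d A : ℚ)

/-- `(Γ,w)` is `d`-general if every balanced multidegree of total degree `d`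
is strictly balanced. -/
def IsDGeneral (k : V → V → ℕ) (w : V → ℕ) (D : ℤ) : Prop :=
  ∀ d : V → ℤ, IsBalanced k w D d → IsStrictlyBalanced k w D d

/-- The generator `c_v` of the lattice `Λ`. -/
def cvec (k : V → V → ℕ) (v : V) : V → ℤ := fun u =>
  if u = v then -(∑ x ∈ Finset.univ.erase v, (k x v : ℤ)) else (k u v : ℤ)

/-- The lattice `Λ ⊆ ℤ^V` generated by the `c_v`. -/
def Lambda (k : V → V → ℕ) : AddSubgroup (V → ℤ) :=
  AddSubgroup.closure (Set.range (cvec k))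

/-- The total-degree homomorphism `ℤ^V → ℤ`. -/
def sumHom (V : Type) [Fintype V] : (V → ℤ) →+ ℤ :=
  { toFun := fun d => ∑ v, d v
    map_zero' := by simp
    map_add' := fun a b => by simp [Finset.sum_add_distrib] }

/-- `Z = {d ∈ ℤ^V : Σ_v d(v) = 0}`. -/
def Zsub (V : Type) [Fintype V] : AddSubgroup (V → ℤ) := (sumHom V).ker

/-- Remove the edge(s) joining `a` and `b` from the multigraph. -/
def removeEdge (k : V → V → ℕ) (a b : V) : V → V → ℕ := fun u v =>
  if (u = a ∧ v = b) ∨ (u = b ∧ v = a) then 0 else k u v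

/-- `a`–`b` is a bridge: a single non-loop edge whose removal disconnects the graph. -/
def IsBridge (k : V → V → ℕ) (a b : V) : Prop :=
  a ≠ b ∧ k a b = 1 ∧ ¬ (graphOf (removeEdge k a b)).Connected

/-- `A` induces a connected sub-multigraph. -/
def IsConnectedSubset (k : V → V → ℕ) (A : Finset V) : Prop :=
  ((graphOf k).induce (A : Set V)).Connected

/-- The equivalence relation `≈` on `V` generated by bridges. -/
def contractSetoid (k : V → V → ℕ) : Setoid V :=
  ⟨Relation.EqvGen (fun u v => IsBridge k u v), Relation.EqvGen.is_equivalence _⟩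

/-- The vertex set `V² = V/≈` of the contracted graph `Γ²`. -/
def V2 (k : V → V → ℕ) : Type := Quotient (contractSetoid k)

instance (k : V → V → ℕ) : Finite (V2 k) := Quotient.finite _

instance (k : V → V → ℕ) : Fintype (V2 k) := Fintype.ofFinite _

/-- The fiber of the quotient map `φ : V → V²` over a class `c`. -/
def fiber (k : V → V → ℕ) (c : V2 k) : Finset V :=
  Finset.univ.filter (fun v => Quotient.mk (contractSetoid k) v = c)

/-- The multiplicity function `k²` of the contracted graph `Γ²`. -/
def k2 (k : V → V → ℕ) : V2 k → V2 k → ℕ := fun c c' =>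
  if c = c' then
    (∑ v ∈ fiber k c, k v v) +
      (∑ u ∈ fiber k c, ∑ v ∈ (fiber k c).erase u,
        if IsBridge k u v then 0 else k u v) / 2
  else ∑ u ∈ fiber k c, ∑ v ∈ fiber k c', k u v

/-- The weight function `w²` of the contracted weighted graph `(Γ²,w²)`. -/
def w2 (k : V → V → ℕ) (w : V → ℕ) : V2 k → ℕ := fun c => ∑ v ∈ fiber k c, w v

/-- The pushforward `α(d)` of a multidegree to the contracted graph. -/
def alphaMap (k : V → V → ℕ) (d : V → ℤ) : V2 k → ℤ := fun c => ∑ v ∈ fiber k c, d v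

/-- The setoid on multidegrees of total degree `D`: two are equivalent if their
difference lies in `Λ`; the quotient is `Δ^d`. -/
def degSetoid (k : V → V → ℕ) (D : ℤ) : Setoid {d : V → ℤ // (∑ v, d v) = D} :=
  ⟨fun a b => (a : V → ℤ) - (b : V → ℤ) ∈ Lambda k, by
    constructor
    · intro a; simpa using (Lambda k).zero_mem
    · intro a b h; have h2 := (Lambda k).neg_mem h; rwa [neg_sub] at h2
    · intro a b c h1 h2
      have h3 := (Lambda k).add_mem h1 h2
      rwa [sub_add_sub_cancel] at h3⟩

/-- Number of edges of the sub-multigraph induced on `A`. -/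
def numEdgesIn (k : V → V → ℕ) (A : Finset V) : ℕ :=
  (∑ v ∈ A, k v v) + (∑ u ∈ A, ∑ v ∈ A.erase u, k u v) / 2

/-- Blow-up of a multigraph at the single bridge `a`–`b`: one exceptional
vertex is inserted in the middle of the bridge. -/
def blowK (k : V → V → ℕ) (a b : V) : (V ⊕ Unit) → (V ⊕ Unit) → ℕ
  | Sum.inl u, Sum.inl v => if (u = a ∧ v = b) ∨ (u = b ∧ v = a) then 0 else k u v
  | Sum.inl u, Sum.inr _ => if u = a ∨ u = b then 1 else 0
  | Sum.inr _, Sum.inl v => if v = a ∨ v = b then 1 else 0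
  | Sum.inr _, Sum.inr _ => 0

/-- Weight function of the blow-up at one bridge: exceptional vertex has weight 0. -/
def blowW (w : V → ℕ) : V ⊕ Unit → ℕ
  | Sum.inl v => w v
  | Sum.inr _ => 0

/-- Blow-up of a multigraph at a set `S` of bridges (given as ordered pairs):
one exceptional vertex is inserted in the middle of each bridge of `S`. -/
def blowKS (k : V → V → ℕ) (S : Finset (V × V)) :
    (V ⊕ {p : V × V // p ∈ S}) → (V ⊕ {p : V × V // p ∈ S}) → ℕ
  | Sum.inl u, Sum.inl v => if (u, v) ∈ S ∨ (v, u) ∈ S then 0 else k u v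
  | Sum.inl u, Sum.inr e => if u = e.1.1 ∨ u = e.1.2 then 1 else 0
  | Sum.inr e, Sum.inl v => if v = e.1.1 ∨ v = e.1.2 then 1 else 0
  | Sum.inr _, Sum.inr _ => 0

/-- Weight function of the blow-up at a set of bridges. -/
def blowWS (w : V → ℕ) (S : Finset (V × V)) : (V ⊕ {p : V × V // p ∈ S}) → ℕ
  | Sum.inl v => w v
  | Sum.inr _ => 0

/-- Strictly balanced multidegree of total degree `D` on the blow-up `Γ̂_S`:
balanced (with degree 1 on each exceptional vertex), and the inequality is
strict for every proper nonempty `A` such that some edge between `A` and its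
complement has no exceptional endpoint. -/
def IsStrictlyBalancedBlowS (k : V → V → ℕ) (w : V → ℕ) (S : Finset (V × V)) (D : ℤ)
    (dh : (V ⊕ {p : V × V // p ∈ S}) → ℤ) : Prop :=
  IsBalanced (blowKS k S) (blowWS w S) D dh ∧
    (∀ e : {p : V × V // p ∈ S}, dh (Sum.inr e) = 1) ∧
    ∀ A : Finset (V ⊕ {p : V × V // p ∈ S}), A ≠ ∅ → A ≠ Finset.univ →
      (∃ u v : V, Sum.inl u ∈ A ∧ Sum.inl v ∉ A ∧ 0 < blowKS k S (Sum.inl u) (Sum.inl v)) →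
      mA (blowKS k S) (blowWS w S) D A < (degA dh A : ℚ)

/-- Multiplicity function of the vine graph: two vertices joined by `δ` edges,
no loops. -/
def vineK (δ : ℕ) : Fin 2 → Fin 2 → ℕ := fun u v => if u = v then 0 else δ

/-- Weight function of the vine graph with weights `g₁, g₂`. -/
def vineW (g1 g2 : ℕ) : Fin 2 → ℕ := fun v => if v = 0 then g1 else g2

/-- The data of a stable vine graph of genus `g` with weights `g₁, g₂` and `δ` edges. -/
def StableVine (g : ℤ) (g1 g2 δ : ℕ) : Prop :=
  2 ≤ δ ∧ ((g1 = 0 ∨ g2 = 0) → 3 ≤ δ) ∧ (g1 : ℤ) + (g2 : ℤ) + (δ : ℤ) - 1 = g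

/-!
Write `q` for the fractional multidegree with `q_A = d·w_A/(2g−2)`; then a multidegree of total
degree `d` is balanced iff `|d_A − q_A| ≤ δ_A/2` for every `A`. Every class of `≈` spans a tree of
bridges, so on unions of classes `w_A` and `δ_A` agree with their counterparts in `Γ²`, which has
the same genus: on such sets the condition is exactly the balancedness of `d²`.

Lift `d²` to any multidegree and move degree across the bridges (inside their classes, so `α` does
not change) until every side `S` of a bridge has degree the nearest integer to `q_S`; as `δ_S = 1`,
the condition holds on `S`. Every other `A` reduces to these cases, because `δ` is additive in the
two decompositions used: if a bridge leaving `A` has far side `S` meeting `A`, then no edge joins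
`A \ S` and `A ∩ S`; otherwise `A = (A ∪ S) \ S` and the only edge leaving `S` ends in `A`.
-/

namespace BalancedContraction

section Cuts

variable {k : V → V → ℕ} {A B T : Finset V}

def edgeCount (k : V → V → ℕ) (A B : Finset V) : ℤ := ∑ u ∈ A, ∑ v ∈ B, (k u v : ℤ)

omit [Fintype V] [DecidableEq V] in
lemma edgeCount_comm (hsym : ∀ u v, k u v = k v u) : edgeCount k A B = edgeCount k B A := by
  rw [edgeCount, edgeCount, Finset.sum_comm]
  simp only [hsym]

lemma deltaA_compl (hsym : ∀ u v, k u v = k v u) : deltaA k Aᶜ = deltaA k A := by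
  rw [deltaA, compl_compl, ← edgeCount, edgeCount_comm hsym]
  rfl

omit [Fintype V] in
lemma edgeCount_union_left (hAB : Disjoint A B) :
    edgeCount k (A ∪ B) T = edgeCount k A T + edgeCount k B T :=
  Finset.sum_union hAB

lemma deltaA_eq_edgeCount_add (hAB : Disjoint A B) :
    deltaA k A = edgeCount k A B + edgeCount k A (A ∪ B)ᶜ := by
  have hA : Aᶜ = B ∪ (A ∪ B)ᶜ := by
    ext x; by_cases hx : x ∈ A <;> simp [hx, Finset.disjoint_left.1 hAB, em]
  rw [deltaA, hA, edgeCount, edgeCount, ← Finset.sum_add_distrib]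
  exact Finset.sum_congr rfl fun u _ =>
    Finset.sum_union (Finset.disjoint_of_subset_left Finset.subset_union_right disjoint_compl_right)

lemma deltaA_union (hAB : Disjoint A B) :
    deltaA k (A ∪ B) = edgeCount k A (A ∪ B)ᶜ + edgeCount k B (A ∪ B)ᶜ :=
  edgeCount_union_left hAB

end Cuts

section BalancedAt

def IsBalancedAt (k : V → V → ℕ) (q : V → ℚ) (d : V → ℤ) (A : Finset V) : Prop :=
  |(degA d A : ℚ) - ∑ v ∈ A, q v| ≤ (deltaA k A : ℚ) / 2

variable {k : V → V → ℕ} {q : V → ℚ} {d : V → ℤ} {A B T : Finset V}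

omit [Fintype V] in
lemma degA_union (hAB : Disjoint A B) : degA d (A ∪ B) = degA d A + degA d B :=
  Finset.sum_union hAB

lemma IsBalancedAt.union (hsym : ∀ u v, k u v = k v u) (hAB : Disjoint A B)
    (hno : ∀ u ∈ A, ∀ v ∈ B, k u v = 0) (hA : IsBalancedAt k q d A)
    (hB : IsBalancedAt k q d B) : IsBalancedAt k q d (A ∪ B) := by
  have hcut : edgeCount k A B = 0 :=
    Finset.sum_eq_zero fun u hu => Finset.sum_eq_zero fun v hv => by simp [hno u hu v hv]
  have hδ : deltaA k A + deltaA k B = deltaA k (A ∪ B) := by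
    rw [deltaA_eq_edgeCount_add hAB, deltaA_eq_edgeCount_add hAB.symm, deltaA_union hAB,
      hcut, edgeCount_comm hsym (A := B), hcut, Finset.union_comm B A]
    ring
  unfold IsBalancedAt at *
  rw [degA_union hAB, Finset.sum_union hAB]
  push_cast
  calc _ = |((degA d A : ℚ) - ∑ v ∈ A, q v) + ((degA d B : ℚ) - ∑ v ∈ B, q v)| := by ring_nf
    _ ≤ _ := abs_add_le _ _
    _ ≤ _ := by
      have : (deltaA k A : ℚ) + deltaA k B = deltaA k (A ∪ B) := by exact_mod_cast hδ
      linarith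

lemma IsBalancedAt.of_union (hsym : ∀ u v, k u v = k v u) (hAT : Disjoint A T)
    (hexit : ∀ u ∈ T, ∀ v ∉ A ∪ T, k u v = 0)
    (hAT' : IsBalancedAt k q d (A ∪ T)) (hT : IsBalancedAt k q d T) : IsBalancedAt k q d A := by
  have hcut : edgeCount k T (A ∪ T)ᶜ = 0 := Finset.sum_eq_zero fun u hu =>
    Finset.sum_eq_zero fun v hv => by simp [hexit u hu v (Finset.mem_compl.1 hv)]
  have hδ : (deltaA k A : ℚ) = deltaA k (A ∪ T) + deltaA k T := by
    rw [deltaA_eq_edgeCount_add hAT, deltaA_eq_edgeCount_add hAT.symm, deltaA_union hAT,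
      Finset.union_comm T A, hcut, edgeCount_comm hsym]
    push_cast; ring
  unfold IsBalancedAt at *
  rw [degA_union hAT, Finset.sum_union hAT] at hAT'
  push_cast at hAT'
  calc _ = |((degA d A + degA d T : ℚ) - (∑ v ∈ A, q v + ∑ v ∈ T, q v))
        - ((degA d T : ℚ) - ∑ v ∈ T, q v)| := by ring_nf
    _ ≤ _ := abs_sub _ _
    _ ≤ _ := by linarith

lemma IsBalancedAt.compl (hsym : ∀ u v, k u v = k v u)
    (htot : (degA d Finset.univ : ℚ) = ∑ v, q v) (hA : IsBalancedAt k q d A) :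
    IsBalancedAt k q d Aᶜ := by
  have hd : (degA d Aᶜ : ℚ) = degA d Finset.univ - degA d A := by
    rw [← Finset.union_compl A, degA_union disjoint_compl_right]; push_cast; ring
  have hq : ∑ v ∈ Aᶜ, q v = ∑ v, q v - ∑ v ∈ A, q v := by
    rw [← Finset.sum_add_sum_compl A q]; ring
  unfold IsBalancedAt at *
  rw [deltaA_compl hsym, hd, hq, htot, ← abs_neg]
  convert hA using 2
  ring

end BalancedAt

section Bridges

variable {k : V → V → ℕ}

omit [Fintype V] in
lemma removeEdge_comm (a b : V) : removeEdge k a b = removeEdge k b a := by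
  funext u v
  simp only [removeEdge, or_comm]

omit [Fintype V] in
lemma _root_.IsBridge.symm (hsym : ∀ u v, k u v = k v u) {a b : V} (h : IsBridge k a b) :
    IsBridge k b a :=
  ⟨h.1.symm, hsym b a ▸ h.2.1, removeEdge_comm (k := k) a b ▸ h.2.2⟩

omit [Fintype V] in
lemma _root_.IsBridge.pos {a b : V} (h : IsBridge k a b) : 0 < k a b := by
  rw [h.2.1]; exact Nat.one_pos

omit [Fintype V] in
lemma removeEdge_le {a b : V} (u v : V) : removeEdge k a b u v ≤ k u v := by
  unfold removeEdge; split_ifs <;> simp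

omit [Fintype V] in
lemma adj_removeEdge {x y u v : V} (h : (graphOf k).Adj u v)
    (huv : ¬((u = x ∧ v = y) ∨ (u = y ∧ v = x))) : (graphOf (removeEdge k x y)).Adj u v := by
  have hvu : ¬((v = x ∧ u = y) ∨ (v = y ∧ u = x)) := by tauto
  exact ⟨h.1, by simpa only [removeEdge, if_neg huv, if_neg hvu] using h.2⟩

def bridgeSide (k : V → V → ℕ) (x y : V) : Finset V :=
  Finset.univ.filter fun v => (graphOf (removeEdge k x y)).Reachable y v

lemma mem_bridgeSide {x y v : V} :
    v ∈ bridgeSide k x y ↔ (graphOf (removeEdge k x y)).Reachable y v := by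
  simp [bridgeSide]

lemma right_mem_bridgeSide {x y : V} : y ∈ bridgeSide k x y := mem_bridgeSide.2 .rfl

variable (hconn : (graphOf k).Connected) {x y : V} (hb : IsBridge k x y)
include hconn

omit [Fintype V] hb in
lemma reachable_removeEdge_or (v : V) :
    (graphOf (removeEdge k x y)).Reachable y v ∨ (graphOf (removeEdge k x y)).Reachable x v := by
  have hr := hconn.preconnected y v
  rw [SimpleGraph.reachable_iff_reflTransGen] at hr
  induction hr with
  | refl => exact Or.inl .rfl
  | @tail b c _ hbc ih =>
    by_cases hc : (b = x ∧ c = y) ∨ (b = y ∧ c = x)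
    · rcases hc with ⟨_, rfl⟩ | ⟨_, rfl⟩
      · exact Or.inl .rfl
      · exact Or.inr .rfl
    · exact ih.imp (·.trans (adj_removeEdge hbc hc).reachable)
        (·.trans (adj_removeEdge hbc hc).reachable)

include hb

omit [Fintype V] in
lemma not_reachable_removeEdge : ¬(graphOf (removeEdge k x y)).Reachable y x := by
  intro hyx
  have hy (v : V) : (graphOf (removeEdge k x y)).Reachable y v :=
    (reachable_removeEdge_or hconn v).elim id hyx.trans
  have : Nonempty V := ⟨x⟩
  exact hb.2.2 ⟨fun u v => (hy u).symm.trans (hy v)⟩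

lemma left_not_mem_bridgeSide : x ∉ bridgeSide k x y :=
  fun h => not_reachable_removeEdge hconn hb (mem_bridgeSide.1 h)

lemma bridgeSide_swap : bridgeSide k y x = (bridgeSide k x y)ᶜ := by
  ext v
  rw [Finset.mem_compl, mem_bridgeSide, mem_bridgeSide, ← removeEdge_comm]
  refine ⟨fun hxv hyv => not_reachable_removeEdge hconn hb (hyv.trans hxv.symm), fun h => ?_⟩
  exact (reachable_removeEdge_or hconn v).resolve_left h

lemma eq_of_mem_bridgeSide_of_not_mem {u v : V} (hu : u ∈ bridgeSide k x y)
    (hv : v ∉ bridgeSide k x y) (hk : 0 < k u v) : u = y ∧ v = x := by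
  by_contra hne
  have hc : ¬((u = x ∧ v = y) ∨ (u = y ∧ v = x)) := by
    rintro (⟨rfl, -⟩ | h)
    · exact left_not_mem_bridgeSide hconn hb hu
    · exact hne h
  have hadj : (graphOf k).Adj u v := ⟨fun h => hv (h ▸ hu), Or.inl hk⟩
  exact hv (mem_bridgeSide.2 ((mem_bridgeSide.1 hu).trans (adj_removeEdge hadj hc).reachable))

lemma eq_of_not_mem_bridgeSide_of_mem (hsym : ∀ u v, k u v = k v u) {u v : V}
    (hu : u ∉ bridgeSide k x y) (hv : v ∈ bridgeSide k x y) (hk : 0 < k u v) :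
    u = x ∧ v = y :=
  (eq_of_mem_bridgeSide_of_not_mem hconn hb hv hu (hsym u v ▸ hk)).symm

lemma deltaA_bridgeSide (hsym : ∀ u v, k u v = k v u) : deltaA k (bridgeSide k x y) = 1 := by
  have hS : y ∈ bridgeSide k x y := right_mem_bridgeSide
  have hx : x ∈ (bridgeSide k x y)ᶜ := Finset.mem_compl.2 (left_not_mem_bridgeSide hconn hb)
  have hzero {u v : V} (hu : u ∈ bridgeSide k x y) (hv : v ∈ (bridgeSide k x y)ᶜ)
      (huv : ¬(u = y ∧ v = x)) : (k u v : ℤ) = 0 := by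
    by_contra h
    exact huv (eq_of_mem_bridgeSide_of_not_mem hconn hb hu (Finset.mem_compl.1 hv)
      (Nat.pos_of_ne_zero (by exact_mod_cast h)))
  rw [deltaA, Finset.sum_eq_single_of_mem y hS fun u hu huy =>
      Finset.sum_eq_zero fun v hv => hzero hu hv (huy ·.1),
    Finset.sum_eq_single_of_mem x hx fun v hv hvx => hzero hS hv (hvx ·.2), hsym, hb.2.1]
  rfl

lemma iff_mem_bridgeSide_of_ne (hsym : ∀ u v, k u v = k v u) {a b : V} (hab : IsBridge k a b)
    (h₁ : (a, b) ≠ (x, y)) (h₂ : (a, b) ≠ (y, x)) :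
    a ∈ bridgeSide k x y ↔ b ∈ bridgeSide k x y := by
  by_cases ha : a ∈ bridgeSide k x y <;> by_cases hb' : b ∈ bridgeSide k x y
  · exact iff_of_true ha hb'
  · obtain ⟨rfl, rfl⟩ := eq_of_mem_bridgeSide_of_not_mem hconn hb ha hb' hab.pos
    exact absurd rfl h₂
  · obtain ⟨rfl, rfl⟩ := eq_of_not_mem_bridgeSide_of_mem hconn hb hsym ha hb' hab.pos
    exact absurd rfl h₁
  · exact iff_of_false ha hb'

lemma disjoint_bridgeSide (hsym : ∀ u v, k u v = k v u) {x' y' : V} (hb' : IsBridge k x' y')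
    (hne : (x, y) ≠ (x', y')) (hx : x ∉ bridgeSide k x' y') (hx' : x' ∉ bridgeSide k x y) :
    Disjoint (bridgeSide k x y) (bridgeSide k x' y') := by
  have hy' : y' ∉ bridgeSide k x y := fun h => hne <| by
    obtain ⟨rfl, rfl⟩ := eq_of_not_mem_bridgeSide_of_mem hconn hb hsym hx' h hb'.pos
    rfl
  refine Finset.disjoint_right.2 fun z hz => ?_
  rw [mem_bridgeSide, SimpleGraph.reachable_iff_reflTransGen] at hz
  induction hz with
  | refl => exact hy'
  | @tail b c hy'b hbc ih =>
    intro hc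
    have hkbc : 0 < k b c := by
      rcases hbc.2 with h | h
      · exact h.trans_le (removeEdge_le b c)
      · exact hsym b c ▸ h.trans_le (removeEdge_le c b)
    obtain ⟨rfl, -⟩ := eq_of_not_mem_bridgeSide_of_mem hconn hb hsym ih hc hkbc
    exact hx (mem_bridgeSide.2 ((SimpleGraph.reachable_iff_reflTransGen _ _).2 hy'b))

end Bridges

section Classes

variable {k : V → V → ℕ}

def phi (k : V → V → ℕ) (v : V) : V2 k := Quotient.mk (contractSetoid k) v

lemma mem_fiber {c : V2 k} {v : V} : v ∈ fiber k c ↔ phi k v = c := by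
  simp only [fiber, phi, Finset.mem_filter, Finset.mem_univ, true_and]
  exact Iff.rfl

omit [Fintype V] in
lemma phi_eq_of_isBridge {a b : V} (h : IsBridge k a b) : phi k a = phi k b :=
  Quotient.sound (Relation.EqvGen.rel a b h)

def classPreimage (k : V → V → ℕ) (B : Finset (V2 k)) : Finset V :=
  Finset.univ.filter fun v => phi k v ∈ B

lemma mem_classPreimage {B : Finset (V2 k)} {v : V} : v ∈ classPreimage k B ↔ phi k v ∈ B := by
  simp [classPreimage]

lemma sum_classPreimage {M : Type} [AddCommMonoid M] (B : Finset (V2 k)) (g : V → M) :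
    ∑ v ∈ classPreimage k B, g v = ∑ c ∈ B, ∑ v ∈ fiber k c, g v := by
  rw [← Finset.sum_fiberwise_of_maps_to (g := phi k) (t := B)
    (fun v hv => mem_classPreimage.1 hv)]
  refine Finset.sum_congr rfl fun c hc => Finset.sum_congr ?_ fun _ _ => rfl
  ext v
  simp only [Finset.mem_filter, mem_classPreimage, mem_fiber]
  exact ⟨fun h => h.2, fun h => ⟨h ▸ hc, h⟩⟩

lemma sum_fiber {M : Type} [AddCommMonoid M] (g : V → M) :
    ∑ c, ∑ v ∈ fiber k c, g v = ∑ v, g v :=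
  Finset.sum_fiberwise Finset.univ (phi k) g

lemma classPreimage_compl (B : Finset (V2 k)) : classPreimage k Bᶜ = (classPreimage k B)ᶜ := by
  ext v; simp [mem_classPreimage]

lemma degA_classPreimage (d : V → ℤ) (B : Finset (V2 k)) :
    degA d (classPreimage k B) = degA (alphaMap k d) B :=
  sum_classPreimage B d

lemma eq_classPreimage_image_of_bridge_closed (hsym : ∀ u v, k u v = k v u) {A : Finset V}
    (hA : ∀ a b, IsBridge k a b → a ∈ A → b ∈ A) : A = classPreimage k (A.image (phi k)) := by
  let sameSide (u v : V) : Prop := u ∈ A ↔ v ∈ A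
  have hclass {u v : V} (h : Relation.EqvGen (IsBridge k) u v) : sameSide u v :=
    (Equivalence.eqvGen_iff (r := sameSide) ⟨fun _ => Iff.rfl, Iff.symm, Iff.trans⟩).1 <|
      Relation.EqvGen.mono (p := sameSide)
        (fun a b hab => ⟨hA a b hab, hA b a (hab.symm hsym)⟩) _ _ h
  ext u
  simp only [mem_classPreimage, Finset.mem_image]
  exact ⟨fun hu => ⟨u, hu, rfl⟩, fun ⟨v, hv, huv⟩ => (hclass (Quotient.exact huv)).1 hv⟩

end Classes

section BridgeForest

variable {k : V → V → ℕ}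

abbrev bridgeGraph (k : V → V → ℕ) : SimpleGraph V := SimpleGraph.fromRel (IsBridge k)

omit [Fintype V] in
lemma bridgeGraph_adj (hsym : ∀ u v, k u v = k v u) {u v : V} :
    (bridgeGraph k).Adj u v ↔ IsBridge k u v := by
  rw [SimpleGraph.fromRel_adj]
  exact ⟨fun ⟨_, h⟩ => h.elim id (·.symm hsym), fun h => ⟨h.1, Or.inl h⟩⟩

omit [Fintype V] in
lemma isAcyclic_bridgeGraph (hconn : (graphOf k).Connected) (hsym : ∀ u v, k u v = k v u) :
    (bridgeGraph k).IsAcyclic := by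
  rw [SimpleGraph.isAcyclic_iff_forall_adj_isBridge]
  intro v w hvw hr
  have hb := (bridgeGraph_adj hsym).1 hvw
  refine not_reachable_removeEdge hconn hb (hr.symm.mono fun a b hab => ?_)
  rw [SimpleGraph.deleteEdges_adj, bridgeGraph_adj hsym, Set.mem_singleton_iff, Sym2.eq_iff] at hab
  exact adj_removeEdge ⟨hab.1.1, Or.inl hab.1.pos⟩ hab.2

omit [Fintype V] in
lemma phi_eq_iff_reachable (hsym : ∀ u v, k u v = k v u) {u v : V} :
    phi k u = phi k v ↔ (bridgeGraph k).Reachable u v := by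
  have hgen {a b : V} (h : Relation.EqvGen (IsBridge k) a b) : (bridgeGraph k).Reachable a b :=
    (bridgeGraph k).reachable_is_equivalence.eqvGen_iff.1 <|
      Relation.EqvGen.mono (fun a b hab => ((bridgeGraph_adj hsym).2 hab).reachable) _ _ h
  refine ⟨fun h => hgen (Quotient.exact h), ?_⟩
  rintro ⟨p⟩
  induction p with
  | nil => rfl
  | cons hadj _ ih => exact (phi_eq_of_isBridge ((bridgeGraph_adj hsym).1 hadj)).trans ih

lemma isTree_induce_fiber (hconn : (graphOf k).Connected) (hsym : ∀ u v, k u v = k v u)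
    (c : V2 k) : ((bridgeGraph k).induce (fiber k c : Set V)).IsTree := by
  have hsupp : (fiber k c : Set V) = ((bridgeGraph k).connectedComponentMk c.out).supp := by
    ext v
    rw [Finset.mem_coe, mem_fiber, SimpleGraph.ConnectedComponent.mem_supp_iff,
      SimpleGraph.ConnectedComponent.eq, ← phi_eq_iff_reachable hsym]
    exact ⟨fun h => h.trans (Quotient.out_eq c).symm, fun h => h.trans (Quotient.out_eq c)⟩
  refine ⟨?_, (isAcyclic_bridgeGraph hconn hsym).induce _⟩
  rw [hsupp]
  exact (SimpleGraph.ConnectedComponent.maximal_connected_induce_supp _).prop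

lemma sum_card_bridges_fiber (hconn : (graphOf k).Connected) (hsym : ∀ u v, k u v = k v u)
    (c : V2 k) :
    ∑ u ∈ fiber k c, ((Finset.univ.filter (IsBridge k u)).card : ℤ) = 2 * (fiber k c).card - 2 := by
  have htree := (isTree_induce_fiber hconn hsym c).card_edgeFinset
  have hdeg (u : (fiber k c : Set V)) :
      ((bridgeGraph k).induce (fiber k c : Set V)).degree u
        = (Finset.univ.filter (IsBridge k u)).card := by
    have hsub : (bridgeGraph k).neighborSet u ⊆ fiber k c := fun v huv => by
      rw [Finset.mem_coe, mem_fiber, ← mem_fiber.1 (Finset.mem_coe.1 u.2)]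
      exact (phi_eq_of_isBridge ((bridgeGraph_adj hsym).1 huv)).symm
    calc _ = (bridgeGraph k).degree u := by
          convert SimpleGraph.degree_induce_of_neighborSet_subset hsub
      _ = _ := by
          rw [← SimpleGraph.card_neighborFinset_eq_degree, SimpleGraph.neighborFinset_eq_filter]
          simp only [bridgeGraph_adj hsym]
  have hsum := ((bridgeGraph k).induce (fiber k c : Set V)).sum_degrees_eq_twice_card_edges
  simp only [hdeg] at hsum
  rw [Finset.sum_finset_coe (fun u => (Finset.univ.filter (IsBridge k u)).card)] at hsum
  simp only [Finset.coe_sort_coe, Fintype.card_coe] at htree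
  rw [← htree]
  push_cast
  rw [← Nat.cast_sum, hsum]
  push_cast
  ring

end BridgeForest

section Contraction

variable {k : V → V → ℕ}

omit [Fintype V] in
lemma even_sum_sum_erase (s : Finset V) (f : V → V → ℕ) (hf : ∀ u v, f u v = f v u) :
    Even (∑ u ∈ s, ∑ v ∈ s.erase u, f u v) := by
  rw [← ZMod.natCast_eq_zero_iff_even, ← Finset.sum_finset_product (r := s.offDiag) (s := s)
    (t := fun u => s.erase u) (f := fun p => f p.1 p.2) (by simp [and_comm, eq_comm]),
    Nat.cast_sum]
  refine Finset.sum_involution (fun p _ => p.swap) (fun p _ => ?_) (fun p hp _ => ?_)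
    (fun p hp => ?_) (fun p _ => rfl)
  · rw [Prod.snd_swap, Prod.fst_swap, hf p.2 p.1, ← two_mul]
    exact mul_eq_zero_of_left rfl _
  · exact fun h => (Finset.mem_offDiag.1 hp).2.2 (congrArg Prod.fst h).symm
  · obtain ⟨h₁, h₂, h₃⟩ := Finset.mem_offDiag.1 hp
    exact Finset.mem_offDiag.2 ⟨h₂, h₁, h₃.symm⟩

def nonBridgeMult (k : V → V → ℕ) (u v : V) : ℕ := if IsBridge k u v then 0 else k u v

omit [Fintype V] in
lemma nonBridgeMult_symm (hsym : ∀ u v, k u v = k v u) (u v : V) :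
    nonBridgeMult k u v = nonBridgeMult k v u := by
  by_cases h : IsBridge k u v
  · simp [nonBridgeMult, h, h.symm hsym]
  · have h' : ¬IsBridge k v u := fun h' => h (h'.symm hsym)
    simp [nonBridgeMult, h, h', hsym u v]

omit [Fintype V] in
lemma natCast_eq_nonBridgeMult_add (u v : V) :
    (k u v : ℤ) = nonBridgeMult k u v + if IsBridge k u v then 1 else 0 := by
  by_cases h : IsBridge k u v
  · simp [nonBridgeMult, h, h.2.1]
  · simp [nonBridgeMult, h]

lemma nonBridgeMult_of_mem_fiber_of_not_mem {c : V2 k} {u v : V} (hu : u ∈ fiber k c)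
    (hv : v ∉ fiber k c) : nonBridgeMult k u v = k u v := by
  have : ¬IsBridge k u v := fun h =>
    hv (mem_fiber.2 ((phi_eq_of_isBridge h).symm.trans (mem_fiber.1 hu)))
  simp [nonBridgeMult, this]

lemma k2_self (c : V2 k) : k2 k c c = (∑ v ∈ fiber k c, k v v) +
    (∑ u ∈ fiber k c, ∑ v ∈ (fiber k c).erase u, nonBridgeMult k u v) / 2 :=
  if_pos rfl

lemma k2_of_ne {c c' : V2 k} (h : c ≠ c') :
    k2 k c c' = ∑ u ∈ fiber k c, ∑ v ∈ fiber k c', k u v :=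
  if_neg h

lemma k2_symm (hsym : ∀ u v, k u v = k v u) (c c' : V2 k) : k2 k c c' = k2 k c' c := by
  rcases eq_or_ne c c' with rfl | h
  · rfl
  · rw [k2_of_ne h, k2_of_ne h.symm, Finset.sum_comm]
    simp only [hsym]

lemma classPreimage_singleton (c : V2 k) : classPreimage k {c} = fiber k c := by
  ext v; simp [mem_classPreimage, mem_fiber]

lemma sum_erase_eq_sum_erase_add_sum_compl {F : Finset V} {u : V} (hu : u ∈ F) (g : V → ℤ) :
    ∑ v ∈ Finset.univ.erase u, g v = ∑ v ∈ F.erase u, g v + ∑ v ∈ Fᶜ, g v := by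
  rw [Finset.sum_erase_eq_sub (Finset.mem_univ u), Finset.sum_erase_eq_sub hu,
    ← Finset.sum_add_sum_compl F g]
  ring

lemma two_mul_k2_self (hsym : ∀ u v, k u v = k v u) (c : V2 k) :
    2 * (k2 k c c : ℤ) = 2 * ∑ v ∈ fiber k c, (k v v : ℤ) +
      ∑ u ∈ fiber k c, ∑ v ∈ (fiber k c).erase u, (nonBridgeMult k u v : ℤ) := by
  have heven := Nat.two_mul_div_two_of_even
    (even_sum_sum_erase (fiber k c) (nonBridgeMult k) (nonBridgeMult_symm hsym))
  have hnat : 2 * k2 k c c = 2 * ∑ v ∈ fiber k c, k v v +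
      ∑ u ∈ fiber k c, ∑ v ∈ (fiber k c).erase u, nonBridgeMult k u v := by
    rw [k2_self, mul_add, heven]
  exact_mod_cast hnat

lemma sum_k2_erase (c : V2 k) :
    ∑ c' ∈ Finset.univ.erase c, (k2 k c' c : ℤ) =
      ∑ u ∈ (fiber k c)ᶜ, ∑ v ∈ fiber k c, (k u v : ℤ) := by
  have hB : Finset.univ.erase c = ({c} : Finset (V2 k))ᶜ := by ext; simp
  rw [show (fiber k c)ᶜ = classPreimage k {c}ᶜ by rw [classPreimage_compl, classPreimage_singleton],
    sum_classPreimage, ← hB]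
  refine Finset.sum_congr rfl fun c' hc' => ?_
  rw [k2_of_ne (Finset.ne_of_mem_erase hc')]
  push_cast
  rfl

/-- The bridges inside a class form a tree, so they contribute `2 (#F - 1)`. -/
lemma sum_valence_fiber (hconn : (graphOf k).Connected) (hsym : ∀ u v, k u v = k v u)
    (c : V2 k) :
    ∑ u ∈ fiber k c, ∑ v ∈ Finset.univ.erase u, (k u v : ℤ) =
      ∑ u ∈ fiber k c, ∑ v ∈ (fiber k c).erase u,
          (nonBridgeMult k u v : ℤ)
        + (2 * (fiber k c).card - 2) + ∑ u ∈ fiber k c, ∑ v ∈ (fiber k c)ᶜ, (k u v : ℤ) := by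
  have hbridges : ∑ u ∈ fiber k c, ∑ v ∈ Finset.univ.erase u,
      (if IsBridge k u v then 1 else 0 : ℤ) = 2 * (fiber k c).card - 2 := by
    rw [← sum_card_bridges_fiber hconn hsym c]
    refine Finset.sum_congr rfl fun u _ => ?_
    rw [Finset.sum_boole, Finset.filter_erase, Finset.erase_eq_of_notMem]
    simpa using fun h : IsBridge k u u => h.1 rfl
  have hnonbridges : ∑ u ∈ fiber k c, ∑ v ∈ Finset.univ.erase u,
      (nonBridgeMult k u v : ℤ) =
        ∑ u ∈ fiber k c, ∑ v ∈ (fiber k c).erase u, (nonBridgeMult k u v : ℤ)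
          + ∑ u ∈ fiber k c, ∑ v ∈ (fiber k c)ᶜ, (k u v : ℤ) := by
    rw [← Finset.sum_add_distrib]
    refine Finset.sum_congr rfl fun u hu => ?_
    rw [sum_erase_eq_sum_erase_add_sum_compl hu]
    congr 1
    exact Finset.sum_congr rfl fun v hv => by
      rw [nonBridgeMult_of_mem_fiber_of_not_mem hu (Finset.mem_compl.1 hv)]
  calc _ = ∑ u ∈ fiber k c, ∑ v ∈ Finset.univ.erase u, (nonBridgeMult k u v : ℤ)
        + ∑ u ∈ fiber k c, ∑ v ∈ Finset.univ.erase u, (if IsBridge k u v then 1 else 0 : ℤ) := by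
        simp only [← Finset.sum_add_distrib, ← natCast_eq_nonBridgeMult_add]
    _ = _ := by rw [hnonbridges, hbridges]; ring

lemma wA_eq_sum_wA_singleton (k : V → V → ℕ) (w : V → ℕ) (A : Finset V) :
    wA k w A = ∑ v ∈ A, wA k w {v} := by
  simp only [wA, Finset.sum_singleton]

lemma wA_k2_singleton (hconn : (graphOf k).Connected) (hsym : ∀ u v, k u v = k v u)
    (w : V → ℕ) (c : V2 k) : wA (k2 k) (w2 k w) {c} = wA k w (fiber k c) := by
  have hw : (w2 k w c : ℤ) = ∑ v ∈ fiber k c, (w v : ℤ) := by simp [w2]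
  have hin : ∑ v ∈ fiber k c, ∑ u ∈ Finset.univ.erase v, (k u v : ℤ) =
      ∑ u ∈ fiber k c, ∑ v ∈ Finset.univ.erase u, (k u v : ℤ) :=
    Finset.sum_congr rfl fun v _ => Finset.sum_congr rfl fun u _ => by rw [hsym]
  have hout : ∑ u ∈ (fiber k c)ᶜ, ∑ v ∈ fiber k c, (k u v : ℤ) =
      ∑ u ∈ fiber k c, ∑ v ∈ (fiber k c)ᶜ, (k u v : ℤ) := by
    rw [Finset.sum_comm]
    exact Finset.sum_congr rfl fun v _ => Finset.sum_congr rfl fun u _ => by rw [hsym]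
  simp only [wA, Finset.sum_singleton, sum_k2_erase, hout, two_mul_k2_self hsym, hw,
    Finset.sum_add_distrib, Finset.sum_sub_distrib, hin, sum_valence_fiber hconn hsym,
    Finset.sum_const, Finset.card_singleton, nsmul_eq_mul, Finset.mul_sum]
  ring

lemma classPreimage_univ : classPreimage k Finset.univ = Finset.univ := by
  ext v; simp [mem_classPreimage]

lemma wA_classPreimage (hconn : (graphOf k).Connected) (hsym : ∀ u v, k u v = k v u)
    (w : V → ℕ) (B : Finset (V2 k)) :
    wA k w (classPreimage k B) = wA (k2 k) (w2 k w) B := by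
  rw [wA_eq_sum_wA_singleton k, wA_eq_sum_wA_singleton (k2 k), sum_classPreimage]
  exact Finset.sum_congr rfl fun c _ => by
    rw [wA_k2_singleton hconn hsym, wA_eq_sum_wA_singleton k]

lemma wA_univ (hsym : ∀ u v, k u v = k v u) (w : V → ℕ) :
    wA k w Finset.univ = 2 * genus k w - 2 := by
  have heven := Nat.two_mul_div_two_of_even (even_sum_sum_erase Finset.univ k hsym)
  have hoff : ∑ v, ∑ u ∈ Finset.univ.erase v, (k u v : ℤ) =
      ((∑ u, ∑ v ∈ Finset.univ.erase u, k u v : ℕ) : ℤ) := by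
    push_cast
    exact Finset.sum_congr rfl fun v _ => Finset.sum_congr rfl fun u _ => by rw [hsym]
  have hcast : (2 : ℤ) * ((∑ u, ∑ v ∈ Finset.univ.erase u, k u v) / 2 : ℕ) =
      ((∑ u, ∑ v ∈ Finset.univ.erase u, k u v : ℕ) : ℤ) := by exact_mod_cast heven
  simp only [wA, genus, numEdges, Finset.sum_add_distrib, Finset.sum_sub_distrib, hoff,
    Finset.sum_const, Finset.card_univ, nsmul_eq_mul, ← Finset.mul_sum]
  push_cast
  linarith

lemma genus_k2 (hconn : (graphOf k).Connected) (hsym : ∀ u v, k u v = k v u) (w : V → ℕ) :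
    genus (k2 k) (w2 k w) = genus k w := by
  have h := wA_classPreimage hconn hsym w Finset.univ
  rw [classPreimage_univ, wA_univ hsym, wA_univ (k2_symm hsym)] at h
  linarith

lemma deltaA_classPreimage (B : Finset (V2 k)) :
    deltaA k (classPreimage k B) = deltaA (k2 k) B := by
  rw [deltaA, ← classPreimage_compl, sum_classPreimage]
  refine Finset.sum_congr rfl fun c hc => ?_
  rw [Finset.sum_comm, sum_classPreimage]
  refine Finset.sum_congr rfl fun c' hc' => ?_
  rw [Finset.sum_comm, k2_of_ne fun h : c = c' => Finset.mem_compl.1 hc' (h ▸ hc)]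
  push_cast
  rfl

end Contraction

section Balanced

variable {k : V → V → ℕ} {w : V → ℕ}

def fracDeg (k : V → V → ℕ) (w : V → ℕ) (D : ℤ) (v : V) : ℚ :=
  D * wA k w {v} / ((2 * genus k w - 2 : ℤ) : ℚ)

lemma sum_fracDeg (D : ℤ) (A : Finset V) :
    ∑ v ∈ A, fracDeg k w D v = D * wA k w A / ((2 * genus k w - 2 : ℤ) : ℚ) := by
  rw [wA_eq_sum_wA_singleton, Int.cast_sum, Finset.mul_sum, Finset.sum_div]
  rfl

lemma mA_eq_sum_fracDeg_sub (D : ℤ) (A : Finset V) :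
    mA k w D A = ∑ v ∈ A, fracDeg k w D v - deltaA k A / 2 := by
  rw [sum_fracDeg]
  rfl

lemma sum_fracDeg_univ (hsym : ∀ u v, k u v = k v u) (hg : 2 * genus k w - 2 ≠ 0) (D : ℤ) :
    ∑ v, fracDeg k w D v = D := by
  rw [sum_fracDeg, wA_univ hsym, mul_div_assoc, div_self (by exact_mod_cast hg), mul_one]

lemma isBalanced_iff (hsym : ∀ u v, k u v = k v u) (hg : 2 * genus k w - 2 ≠ 0) (D : ℤ)
    (d : V → ℤ) : IsBalanced k w D d ↔
      degA d Finset.univ = D ∧ ∀ A, IsBalancedAt k (fracDeg k w D) d A := by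
  refine ⟨fun ⟨htot, hA⟩ => ⟨htot, fun A => abs_le.2 ⟨?_, ?_⟩⟩,
    fun ⟨htot, hA⟩ => ⟨htot, fun A => ?_⟩⟩
  · linarith [mA_eq_sum_fracDeg_sub (k := k) (w := w) D A ▸ hA A]
  · have h := mA_eq_sum_fracDeg_sub (k := k) (w := w) D Aᶜ ▸ hA Aᶜ
    rw [deltaA_compl hsym] at h
    have hq : ∑ v ∈ Aᶜ, fracDeg k w D v + ∑ v ∈ A, fracDeg k w D v = D := by
      rw [Finset.sum_compl_add_sum, sum_fracDeg_univ hsym hg]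
    have hd : (degA d Aᶜ : ℚ) + degA d A = D := by
      rw [← htot, ← Int.cast_add, degA, degA, degA, Finset.sum_compl_add_sum]
    linarith
  · linarith [mA_eq_sum_fracDeg_sub (k := k) (w := w) D A, (abs_le.1 (hA A)).1]

lemma isBalancedAt_classPreimage_iff (hconn : (graphOf k).Connected)
    (hsym : ∀ u v, k u v = k v u) (D : ℤ) (d : V → ℤ) (B : Finset (V2 k)) :
    IsBalancedAt k (fracDeg k w D) d (classPreimage k B) ↔
      IsBalancedAt (k2 k) (fracDeg (k2 k) (w2 k w) D) (alphaMap k d) B := by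
  rw [IsBalancedAt, IsBalancedAt, degA_classPreimage, sum_fracDeg, sum_fracDeg,
    wA_classPreimage hconn hsym, genus_k2 hconn hsym, deltaA_classPreimage]

end Balanced

section Propagation

variable {k : V → V → ℕ} {q : V → ℚ} {d : V → ℤ}
  (hconn : (graphOf k).Connected) (hsym : ∀ u v, k u v = k v u)
  (hsat : ∀ A : Finset V, (∀ a b, IsBridge k a b → a ∈ A → b ∈ A) → IsBalancedAt k q d A)
  (hside : ∀ x y, IsBridge k x y → IsBalancedAt k q d (bridgeSide k x y))
include hconn hsym hsat hside

/-- Induction on `#Aᶜ`: `A` is recovered from `A ∪ S` and `S`, for the far side `S` of a bridge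
leaving `A`. -/
lemma isBalancedAt_of_disjoint_bridgeSide (A : Finset V)
    (hA : ∀ x y, IsBridge k x y → x ∈ A → y ∉ A → Disjoint A (bridgeSide k x y)) :
    IsBalancedAt k q d A := by
  by_cases hleave : ∃ x y, IsBridge k x y ∧ x ∈ A ∧ y ∉ A
  · obtain ⟨x, y, hb, hx, hy⟩ := hleave
    have hAS := hA x y hb hx hy
    have hlt : (A ∪ bridgeSide k x y)ᶜ.card < Aᶜ.card := by
      refine Finset.card_lt_card ⟨Finset.compl_subset_compl.2 Finset.subset_union_left, ?_⟩
      exact fun h => Finset.mem_compl.1 (h (Finset.mem_compl.2 hy))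
        (Finset.mem_union_right _ right_mem_bridgeSide)
    have hunion : IsBalancedAt k q d (A ∪ bridgeSide k x y) := by
      refine isBalancedAt_of_disjoint_bridgeSide (A ∪ bridgeSide k x y) fun x' y' hb' hx' hy' => ?_
      rw [Finset.mem_union, not_or] at hy'
      have hx'A : x' ∈ A := (Finset.mem_union.1 hx').resolve_right fun h => hy'.1 <| by
        obtain ⟨-, rfl⟩ := eq_of_mem_bridgeSide_of_not_mem hconn hb h hy'.2 hb'.pos
        exact hx
      have hA' := hA x' y' hb' hx'A hy'.1
      have hne : (x, y) ≠ (x', y') := fun h => hy'.2 <| by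
        cases h
        exact right_mem_bridgeSide
      exact Finset.disjoint_union_left.2 ⟨hA', disjoint_bridgeSide hconn hb hsym hb' hne
        (Finset.disjoint_left.1 hA' hx) (Finset.disjoint_left.1 hAS hx'A)⟩
    refine hunion.of_union hsym hAS (fun u hu v hv => ?_) (hside x y hb)
    by_contra hk
    obtain ⟨-, rfl⟩ := eq_of_mem_bridgeSide_of_not_mem hconn hb hu
      (fun h => hv (Finset.mem_union_right _ h)) (Nat.pos_of_ne_zero hk)
    exact hv (Finset.mem_union_left _ hx)
  · push Not at hleave
    exact hsat A hleave
termination_by Aᶜ.card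
decreasing_by exact hlt

/-- Induction on `#A`: a bridge leaving `A` whose far side meets `A` splits `A` into two parts
with no edge between them. -/
lemma isBalancedAt_of_saturated_of_bridgeSide (A : Finset V) : IsBalancedAt k q d A := by
  by_cases hsplit : ∃ x y, IsBridge k x y ∧ x ∈ A ∧ y ∉ A ∧ ¬Disjoint A (bridgeSide k x y)
  · obtain ⟨x, y, hb, hx, hy, hAS⟩ := hsplit
    obtain ⟨a, haA, haS⟩ := Finset.not_disjoint_iff.1 hAS
    have hlt₁ : (A \ bridgeSide k x y).card < A.card :=
      Finset.card_lt_card ⟨Finset.sdiff_subset, fun h => (Finset.mem_sdiff.1 (h haA)).2 haS⟩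
    have hlt₂ : (A ∩ bridgeSide k x y).card < A.card :=
      Finset.card_lt_card ⟨Finset.inter_subset_left,
        fun h => left_not_mem_bridgeSide hconn hb (Finset.mem_inter.1 (h hx)).2⟩
    rw [← Finset.sdiff_union_inter A (bridgeSide k x y)]
    refine (isBalancedAt_of_saturated_of_bridgeSide (A \ bridgeSide k x y)).union hsym
      (Finset.disjoint_sdiff_inter A _) (fun u hu v hv => ?_)
      (isBalancedAt_of_saturated_of_bridgeSide (A ∩ bridgeSide k x y))
    by_contra hk
    obtain ⟨-, rfl⟩ := eq_of_not_mem_bridgeSide_of_mem hconn hb hsym (Finset.mem_sdiff.1 hu).2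
      (Finset.mem_inter.1 hv).2 (Nat.pos_of_ne_zero hk)
    exact hy (Finset.mem_inter.1 hv).1
  · push Not at hsplit
    exact isBalancedAt_of_disjoint_bridgeSide hconn hsym hsat hside A hsplit
termination_by A.card

end Propagation

section Construction

variable {k : V → V → ℕ}

lemma degA_univ_alphaMap (d : V → ℤ) : degA (alphaMap k d) Finset.univ = degA d Finset.univ := by
  rw [← degA_classPreimage, classPreimage_univ]

omit [Fintype V] in
lemma phi_out (c : V2 k) : phi k c.out = c := Quotient.out_eq c

lemma exists_alphaMap_eq (d2 : V2 k → ℤ) : ∃ d : V → ℤ, alphaMap k d = d2 := by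
  refine ⟨fun v => if v = (phi k v).out then d2 (phi k v) else 0, funext fun c => ?_⟩
  rw [alphaMap, Finset.sum_eq_single_of_mem c.out (mem_fiber.2 (phi_out c)), phi_out, if_pos rfl]
  intro v hv hne
  rw [mem_fiber.1 hv, if_neg hne]

omit [Fintype V] in
lemma degA_add_sum_transfer (d₀ : V → ℤ) (P : Finset (V × V)) (c : V × V → ℤ) (A : Finset V) :
    degA (fun v => d₀ v + ∑ p ∈ P, c p * ((if v = p.2 then 1 else 0) - if v = p.1 then 1 else 0)) A
      = degA d₀ A + ∑ p ∈ P, c p * ((if p.2 ∈ A then 1 else 0) - if p.1 ∈ A then 1 else 0) := by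
  rw [degA, Finset.sum_add_distrib, Finset.sum_comm]
  congr 1
  refine Finset.sum_congr rfl fun p _ => ?_
  rw [← Finset.mul_sum, Finset.sum_sub_distrib, Finset.sum_ite_eq', Finset.sum_ite_eq']

lemma exists_alphaMap_eq_degA_bridgeSide_eq (hconn : (graphOf k).Connected)
    (hsym : ∀ u v, k u v = k v u) (P : Finset (V × V)) (hP : ∀ p ∈ P, IsBridge k p.1 p.2)
    (hPswap : ∀ p ∈ P, p.swap ∉ P) (d2 : V2 k → ℤ) (t : V × V → ℤ) :
    ∃ d : V → ℤ, alphaMap k d = d2 ∧ ∀ p ∈ P, degA d (bridgeSide k p.1 p.2) = t p := by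
  obtain ⟨d₀, hd₀⟩ := exists_alphaMap_eq d2
  refine ⟨fun v => d₀ v + ∑ p ∈ P, (t p - degA d₀ (bridgeSide k p.1 p.2)) *
      ((if v = p.2 then 1 else 0) - if v = p.1 then 1 else 0), funext fun c => ?_, fun p hp => ?_⟩
  · rw [alphaMap, ← degA, degA_add_sum_transfer, ← hd₀]
    refine add_eq_left.2 (Finset.sum_eq_zero fun p hp => ?_)
    have h : (p.2 ∈ fiber k c ↔ p.1 ∈ fiber k c) := by
      rw [mem_fiber, mem_fiber, phi_eq_of_isBridge (hP p hp)]
    simp [h]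
  · rw [degA_add_sum_transfer, Finset.sum_eq_single_of_mem p hp fun p' hp' hne => ?_,
      if_pos right_mem_bridgeSide, if_neg (left_not_mem_bridgeSide hconn (hP p hp))]
    · ring
    -- every other bridge has both ends on the same side of `p`
    have h := iff_mem_bridgeSide_of_ne hconn (hP p hp) hsym (hP p' hp') hne
      fun h => hPswap p hp (by rw [Prod.mk.eta] at h; rwa [h] at hp')
    simp [h]

lemma exists_alphaMap_eq_isBalancedAt_bridgeSide (hconn : (graphOf k).Connected)
    (hsym : ∀ u v, k u v = k v u) {q : V → ℚ} {D : ℤ} (hq : ∑ v, q v = D) (d2 : V2 k → ℤ)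
    (hd2 : degA d2 Finset.univ = D) :
    ∃ d : V → ℤ, alphaMap k d = d2 ∧
      ∀ x y, IsBridge k x y → IsBalancedAt k q d (bridgeSide k x y) := by
  let ι := Fintype.equivFin V
  let P := Finset.univ.filter fun p : V × V => IsBridge k p.1 p.2 ∧ ι p.1 < ι p.2
  obtain ⟨d, hαd, hdP⟩ := exists_alphaMap_eq_degA_bridgeSide_eq hconn hsym P
    (fun p hp => (Finset.mem_filter.1 hp).2.1)
    (fun p hp hp' => lt_asymm (Finset.mem_filter.1 hp).2.2 (Finset.mem_filter.1 hp').2.2) d2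
    fun p => round (∑ v ∈ bridgeSide k p.1 p.2, q v)
  have htot : (degA d Finset.univ : ℚ) = ∑ v, q v := by
    rw [hq, ← hd2, ← hαd, degA_univ_alphaMap]
  have hPbal (p : V × V) (hp : p ∈ P) : IsBalancedAt k q d (bridgeSide k p.1 p.2) := by
    rw [IsBalancedAt, hdP p hp, deltaA_bridgeSide hconn (Finset.mem_filter.1 hp).2.1 hsym,
      abs_sub_comm, Int.cast_one]
    exact abs_sub_round _
  refine ⟨d, hαd, fun x y hb => ?_⟩
  rcases lt_or_gt_of_ne (ι.injective.ne hb.1) with h | h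
  · exact hPbal (x, y) (Finset.mem_filter.2 ⟨Finset.mem_univ _, hb, h⟩)
  · rw [bridgeSide_swap hconn (hb.symm hsym)]
    exact (hPbal (y, x) (Finset.mem_filter.2 ⟨Finset.mem_univ _, hb.symm hsym, h⟩)).compl hsym htot

end Construction

end BalancedContraction

open BalancedContraction

/-- The map `α : B̄_d(Γ,w) → B̄_d(Γ²,w²)` is surjective. -/
theorem stmt9 (V : Type) [Fintype V] [DecidableEq V] (k : V → V → ℕ) (w : V → ℕ)
    (hsym : ∀ u v, k u v = k v u) (hstab : IsStable k w) (hg : 2 ≤ genus k w)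
    (D : ℤ) (d2 : V2 k → ℤ) (hd2 : IsBalanced (k2 k) (w2 k w) D d2) :
    ∃ d : V → ℤ, IsBalanced k w D d ∧ alphaMap k d = d2 := by
  have hconn : (graphOf k).Connected := hstab.1
  have hg' : 2 * genus k w - 2 ≠ 0 := by omega
  obtain ⟨hd2D, hd2A⟩ :=
    (isBalanced_iff (k2_symm hsym) (by rwa [genus_k2 hconn hsym]) D d2).1 hd2
  obtain ⟨d, hαd, hsides⟩ := exists_alphaMap_eq_isBalancedAt_bridgeSide hconn hsym
    (sum_fracDeg_univ hsym hg' D) d2 hd2D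
  have hsat (A : Finset V) (hA : ∀ a b, IsBridge k a b → a ∈ A → b ∈ A) :
      IsBalancedAt k (fracDeg k w D) d A := by
    rw [eq_classPreimage_image_of_bridge_closed hsym hA,
      isBalancedAt_classPreimage_iff hconn hsym, hαd]
    exact hd2A _
  refine ⟨d, (isBalanced_iff hsym hg' D d).2 ⟨?_, ?_⟩, hαd⟩
  · rw [← degA_univ_alphaMap, hαd, hd2D]
  · exact isBalancedAt_of_saturated_of_bridgeSide hconn hsym hsat hsides
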